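/- For λ ∈ (0,1), the function β_λ(ρ) = λ(1+λ)/(1-ρ²) + 2cos(2f₀(ρ))/(ρ²(1-ρ²)), where cos(2f₀(ρ)) = (1-6ρ²+ρ⁴)/(1+ρ²)², is positive for ρ near 0, negative for ρ near 1, and has exactly one zero in the interval (0,1). -/

import Mathlib

/-!
Over the common denominator `ρ²(1 - ρ²)(1 + ρ²)²`, which is positive on `(0, 1)`, the numerator
of `β_λ(ρ)` is `N(ρ²)` for the cubic `N(t) = c t (1 + t)² + 2 (1 - 6t + t²)` with `c = λ(1 + λ)`.
For `0 < c < 2` this cubic is strictly convex on `t ≥ 0` with `N(0) = 2 > 0 > 4c - 8 = N(1)`,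
and a strictly convex function that changes sign on an interval does so exactly once.
-/

noncomputable def β (lam ρ : ℝ) : ℝ :=
  lam * (1 + lam) / (1 - ρ^2) + 2 * ((1 - 6*ρ^2 + ρ^4) / (1 + ρ^2)^2) / (ρ^2 * (1 - ρ^2))

open Set

theorem StrictConvexOn.exists_sign_change {f : ℝ → ℝ} {a b : ℝ} (hab : a ≤ b)
    (hf : StrictConvexOn ℝ (Icc a b) f) (hcont : ContinuousOn f (Icc a b))
    (ha : 0 < f a) (hb : f b < 0) :
    ∃ x ∈ Ioo a b, f x = 0 ∧ (∀ y ∈ Ico a x, 0 < f y) ∧ ∀ y ∈ Ioc x b, f y < 0 := by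
  obtain ⟨x, hx, hfx⟩ := intermediate_value_Ioo' hab hcont ⟨hb, ha⟩
  have below_chord : ∀ {u v}, u ∈ Icc a b → v ∈ Ioo u b → f v < max (f u) (f b) := fun hu hv =>
    hf.lt_on_openSegment hu (right_mem_Icc.2 hab) (hv.1.trans hv.2).ne
      (by rwa [openSegment_eq_Ioo (hv.1.trans hv.2)])
  refine ⟨x, hx, hfx, fun y hy => ?_, fun y hy => ?_⟩
  · by_contra! hfy
    have := below_chord ⟨hy.1, hy.2.le.trans hx.2.le⟩ ⟨hy.2, hx.2⟩
    rw [hfx] at this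
    exact this.not_ge (max_le hfy hb.le)
  · rcases hy.2.lt_or_eq with hyb | rfl
    · have := below_chord (Ioo_subset_Icc_self hx) ⟨hy.1, hyb⟩
      rwa [hfx, max_eq_left hb.le] at this
    · exact hb

def betaNumerator (c t : ℝ) : ℝ := c * t * (1 + t) ^ 2 + 2 * (1 - 6 * t + t ^ 2)

theorem beta_eq_betaNumerator_div {lam ρ : ℝ} (hρ : ρ ∈ Ioo (0 : ℝ) 1) :
    β lam ρ =
      betaNumerator (lam * (1 + lam)) (ρ ^ 2) / (ρ ^ 2 * (1 - ρ ^ 2) * (1 + ρ ^ 2) ^ 2) := by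
  have hρ0 : ρ ≠ 0 := hρ.1.ne'
  have hρ1 : 1 - ρ ^ 2 ≠ 0 := by nlinarith [hρ.1, hρ.2]
  unfold β betaNumerator
  field_simp

theorem beta_denominator_pos {ρ : ℝ} (hρ : ρ ∈ Ioo (0 : ℝ) 1) :
    0 < ρ ^ 2 * (1 - ρ ^ 2) * (1 + ρ ^ 2) ^ 2 := by
  have : 0 < 1 - ρ ^ 2 := by nlinarith [hρ.1, hρ.2]
  have := hρ.1
  positivity

theorem hasDerivAt_betaNumerator (c t : ℝ) :
    HasDerivAt (betaNumerator c) (c * (3 * t ^ 2 + 4 * t + 1) + 4 * t - 12) t := by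
  have hexp : betaNumerator c = fun x => c * x ^ 3 + (2 * c + 2) * x ^ 2 + (c - 12) * x + 2 := by
    funext x
    simp only [betaNumerator]
    ring
  rw [hexp]
  refine ((((hasDerivAt_pow 3 t).const_mul c).add ((hasDerivAt_pow 2 t).const_mul (2 * c + 2))).add
    ((hasDerivAt_id' t).const_mul (c - 12))).add_const 2 |>.congr_deriv ?_
  push_cast
  ring

theorem deriv2_betaNumerator (c t : ℝ) : deriv^[2] (betaNumerator c) t = c * (6 * t + 4) + 4 := by
  have hderiv2 : HasDerivAt (fun t => c * (3 * t ^ 2 + 4 * t + 1) + 4 * t - 12)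
      (c * (6 * t + 4) + 4) t := by
    refine ((((((hasDerivAt_pow 2 t).const_mul 3).add ((hasDerivAt_id' t).const_mul 4)).add_const
      1).const_mul c).add ((hasDerivAt_id' t).const_mul 4)).sub_const 12 |>.congr_deriv ?_
    push_cast
    ring
  rw [Function.iterate_succ_apply, Function.iterate_one,
    funext fun t => (hasDerivAt_betaNumerator c t).deriv, hderiv2.deriv]

theorem strictConvexOn_betaNumerator {c : ℝ} (hc : 0 < c) :
    StrictConvexOn ℝ (Ici 0) (betaNumerator c) := by
  refine strictConvexOn_of_deriv2_pos (convex_Ici 0) (by unfold betaNumerator; fun_prop)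
    fun t ht => ?_
  rw [interior_Ici] at ht
  have : 0 < t := ht
  rw [deriv2_betaNumerator]
  positivity

theorem exists_beta_sign_change {lam : ℝ} (hc0 : 0 < lam * (1 + lam)) (hc2 : lam * (1 + lam) < 2) :
    ∃ ρ₀ ∈ Ioo (0 : ℝ) 1, β lam ρ₀ = 0 ∧
      (∀ ρ ∈ Ioo 0 ρ₀, 0 < β lam ρ) ∧ ∀ ρ ∈ Ioo ρ₀ 1, β lam ρ < 0 := by
  obtain ⟨t₀, ht₀, hzero, hpos, hneg⟩ := StrictConvexOn.exists_sign_change zero_le_one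
    ((strictConvexOn_betaNumerator hc0).subset Icc_subset_Ici_self (convex_Icc 0 1))
    (by unfold betaNumerator; fun_prop)
    (by norm_num [betaNumerator]) (by norm_num [betaNumerator]; linarith)
  have sq_mem : ∀ {ρ : ℝ}, ρ ∈ Ioo (0 : ℝ) 1 → ρ ^ 2 ∈ Ioo (0 : ℝ) 1 := fun hρ =>
    ⟨pow_pos hρ.1 2, by nlinarith [hρ.1, hρ.2]⟩
  have hρ₀ : √t₀ ∈ Ioo (0 : ℝ) 1 :=
    ⟨Real.sqrt_pos.2 ht₀.1, (Real.sqrt_lt' one_pos).2 (by simpa using ht₀.2)⟩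
  refine ⟨√t₀, hρ₀, ?_, fun ρ hρ => ?_, fun ρ hρ => ?_⟩
  · rw [beta_eq_betaNumerator_div hρ₀, Real.sq_sqrt ht₀.1.le, hzero, zero_div]
  · have hρ1 : ρ ∈ Ioo (0 : ℝ) 1 := ⟨hρ.1, hρ.2.trans hρ₀.2⟩
    rw [beta_eq_betaNumerator_div hρ1]
    exact div_pos (hpos _ ⟨(sq_mem hρ1).1.le, (Real.lt_sqrt hρ.1.le).1 hρ.2⟩)
      (beta_denominator_pos hρ1)
  · have hρ1 : ρ ∈ Ioo (0 : ℝ) 1 := ⟨hρ₀.1.trans hρ.1, hρ.2⟩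
    rw [beta_eq_betaNumerator_div hρ1]
    exact div_neg_of_neg_of_pos (hneg _ ⟨(Real.sqrt_lt' hρ1.1).1 hρ.1, (sq_mem hρ1).2.le⟩)
      (beta_denominator_pos hρ1)

theorem beta_sign_structure (lam : ℝ) (hlam : lam ∈ Set.Ioo (0:ℝ) 1) :
    (∃ ε > 0, ∀ ρ ∈ Set.Ioo (0:ℝ) ε, 0 < β lam ρ) ∧
    (∃ ε > 0, ∀ ρ ∈ Set.Ioo (1 - ε) (1:ℝ), β lam ρ < 0) ∧
    (∃! ρ : ℝ, ρ ∈ Set.Ioo (0:ℝ) 1 ∧ β lam ρ = 0) := by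
  obtain ⟨hl0, hl1⟩ := hlam
  obtain ⟨ρ₀, hρ₀, hzero, hpos, hneg⟩ := exists_beta_sign_change (lam := lam) (by positivity)
    (by nlinarith)
  refine ⟨⟨ρ₀, hρ₀.1, hpos⟩, ⟨1 - ρ₀, sub_pos.2 hρ₀.2, fun ρ hρ => hneg ρ ?_⟩,
    ⟨ρ₀, ⟨hρ₀, hzero⟩, fun ρ ⟨hρ, hρzero⟩ => ?_⟩⟩
  · rwa [sub_sub_cancel] at hρ
  · rcases lt_trichotomy ρ ρ₀ with h | h | h
    · exact absurd hρzero (hpos ρ ⟨hρ.1, h⟩).ne'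
    · exact h
    · exact absurd hρzero (hneg ρ ⟨h, hρ.2⟩).ne
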